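/- Let R = ℚ[T,y,z] and define the 6×6 matrix C over R with rows: row 1 = ((Ty−z²)/2, −T², T²−y, −y, −z, −T); row 2 = (−Ty+zy, −(Ty+z²)/2, −T²+Tz, T², y, −z); row 3 = (−T³−T²z, T³−Ty+zy, −(Ty−z²)/2, Tz, −T², y); row 4 = (−T³+y², Ty, Tz+Ty, −(Ty+z²)/2, −T², −y); row 5 = (−T²z−T²y, T³+T²z−y², −T³−Ty, T³−Ty+zy, (Ty+z²)/2, T²); row 6 = (−T³z−T²y+Tzy−z²y, T⁴−T²z−2T²y+Tzy, T³−y², −T³, −T³+Ty−zy, (Ty+z²)/2). Then C² = h·I₆ where h = −T⁵ + 4T³y + T²z² + (1/4)T²y² + (1/2)Tz²y + (1/4)z⁴ − y³. -/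

import Mathlib

noncomputable section
open MvPolynomial

abbrev R3 : Type := MvPolynomial (Fin 3) ℚ

def T : R3 := X 0
def y : R3 := X 1
def z : R3 := X 2

/-- `1/2` as a constant polynomial. -/
def half : R3 := C (1/2 : ℚ)
/-- `1/4` as a constant polynomial. -/
def quarter : R3 := C (1/4 : ℚ)

def Cmat : Matrix (Fin 6) (Fin 6) R3 :=
  !![half*(T*y - z^2), -T^2, T^2 - y, -y, -z, -T;
     -T*y + z*y, -half*(T*y + z^2), -T^2 + T*z, T^2, y, -z;
     -T^3 - T^2*z, T^3 - T*y + z*y, -half*(T*y - z^2), T*z, -T^2, y;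
     -T^3 + y^2, T*y, T*z + T*y, -half*(T*y + z^2), -T^2, -y;
     -T^2*z - T^2*y, T^3 + T^2*z - y^2, -T^3 - T*y, T^3 - T*y + z*y, half*(T*y + z^2), T^2;
     -T^3*z - T^2*y + T*z*y - z^2*y, T^4 - T^2*z - 2*T^2*y + T*z*y, T^3 - y^2, -T^3,
       -T^3 + T*y - z*y, half*(T*y + z^2)]

def h : R3 :=
  -T^5 + 4*T^3*y + T^2*z^2 + quarter*T^2*y^2 + half*T*z^2*y + quarter*z^4 - y^3

/-! `C² = h·I₆` is an identity of polynomials with coefficients in `ℤ[1/2]`, checked entry by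
entry. `ring` cannot see that the constants `half` and `quarter` of `R3` are inverses of `2` and
`4`; in the fraction field of `R3`, into which `R3` embeds, they become the numerals `2⁻¹` and
`4⁻¹`. -/

open Matrix

lemma map_half {K : Type*} [DivisionRing K] (φ : R3 →+* K) : φ half = 2⁻¹ := by
  rw [half, one_div, ← RingHom.comp_apply, map_inv₀, map_ofNat]

lemma map_quarter {K : Type*} [DivisionRing K] (φ : R3 →+* K) : φ quarter = 4⁻¹ := by
  rw [quarter, one_div, ← RingHom.comp_apply, map_inv₀, map_ofNat]

set_option maxHeartbeats 1000000 in
theorem map_Cmat_mul_self {K : Type*} [Field K] [CharZero K] (φ : R3 →+* K) :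
    Cmat.map φ * Cmat.map φ = φ h • 1 := by
  ext i j
  simp only [mul_apply, Fin.sum_univ_six, Matrix.smul_apply, one_apply, smul_eq_mul, map_apply]
  fin_cases i <;> fin_cases j <;>
    simp only [Cmat, h, of_apply, cons_val', cons_val_fin_one, cons_val_zero, cons_val_one, cons_val,
      Fin.zero_eta, Fin.mk_one, Fin.reduceFinMk, Fin.isValue, Fin.reduceEq, ↓reduceIte, mul_one, mul_zero,
      map_add, map_sub, map_neg, map_mul, map_pow, map_ofNat, map_half, map_quarter] <;>
    ring

/-- The 6×6 matrix `C` squares to `h·I₆`, giving the matrix factorisation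
`(xI₆ − C)(xI₆ + C) = (x² − h)I₆` of the length-3 flop hypersurface. -/
theorem Cmat_sq : Cmat * Cmat = h • (1 : Matrix (Fin 6) (Fin 6) R3) := by
  apply Matrix.map_injective (IsFractionRing.injective R3 (FractionRing R3))
  simp only [Matrix.map_mul, Matrix.map_smul' _ _ _ (map_mul _),
    Matrix.map_one _ (map_zero _) (map_one _)]
  exact map_Cmat_mul_self (algebraMap R3 (FractionRing R3))

end
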